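/- For all integers 0 ≤ i ≤ d and 0 ≤ j ≤ e, Ψ(qbase(i,x,d)_q · qbase(j,x,e)_q) = (-1)^{d-i+e-j} q^{-C(d-i,2) + (d-i)(e-j) - C(e-j,2)} / ([d+e+1]_q · qbinom(d+e, d-i+j)_q). -/

import Mathlib

open Polynomial Finset

noncomputable section

/-- The field ℚ(q) of rational functions. -/
abbrev K : Type := RatFunc ℚ

/-- The variable q of ℚ(q). -/
def qq : K := RatFunc.X

/-- The q-integer [n]_t = (t^n - 1)/(t - 1), for n ∈ ℤ. -/
def qint (t : K) (n : ℤ) : K := (t ^ n - 1) / (t - 1)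

/-- The q-factorial [n]!_t. -/
def qfact (t : K) (n : ℕ) : K := ∏ i ∈ range n, qint t (i + 1)

/-- The generalized q-binomial qbinom(m, n)_t = [m]_t [m-1]_t ⋯ [m-n+1]_t / [n]!_t. -/
def qbinom (t : K) (m : ℤ) (n : ℕ) : K := (∏ i ∈ range n, qint t (m - i)) / qfact t n

/-- The q-binomial with the vanishing convention: 0 unless 0 ≤ n ≤ m. -/
def qbinomv (t : K) (m n : ℤ) : K :=
  if 0 ≤ n ∧ n ≤ m then (∏ i ∈ range n.toNat, qint t (m - i)) / qfact t n.toNat else 0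

/-- The polynomial [n, x]_t = [n]_t + t^n x. -/
def qb (t : K) (n : ℤ) : Polynomial K := C (qint t n) + C (t ^ n) * X

/-- The polynomial qbase(m, x, n)_t = [m-n+1,x]_t ⋯ [m,x]_t / [n]!_t. -/
def qbase (t : K) (m : ℤ) (n : ℕ) : Polynomial K :=
  (∏ i ∈ range n, qb t (m - n + 1 + i)) * C (qfact t n)⁻¹

/-- The linear form V: essentially (1/q) times the derivative at x = [-1]_q = -1/q. -/
def qV (E : Polynomial K) : K := (Polynomial.derivative E).eval (-qq⁻¹) / qq

/-- The defining property of the q-summation operator Σ: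
(ΣE)([n]_q) = Σ_{j=0}^n q^j E([j]_q) for all n ≥ 0. -/
def IsQSigma (S : Polynomial K →ₗ[K] Polynomial K) : Prop :=
  ∀ E : Polynomial K, ∀ n : ℕ,
    (S E).eval (qint qq n) = ∑ j ∈ range (n + 1), qq ^ j * E.eval (qint qq j)

/-!
At the points `x = [k]_q` the polynomial `qbase(m, x, n)` takes the value `qbinom(m + k, n)`, so
the q-Pascal rule telescopes to `Σ qbase(m, x, n) = q^(n-m) qbase(m+1, x, n+1)`. Among the factors
of `qbase(i+1, x, i+a+1)` only `[1, x]` vanishes at `x = [-1]_q = -1/q`, so `V` of it is the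
product of the other factors there; this gives `Ψ qbase(i, x, i+a)`.

Peeling the top factor off `qbase(j+1, x, j+1)`, or the bottom factor off `qbase(j, x, j+b+1)`,
and using `q^(m+1) x qbase(m, x, d) = [d+1] qbase(m+1, x, d+1) - [m+1] qbase(m, x, d)` expresses
`Ψ(qbase(i, x, d) qbase(j, x, e))` through products whose second factor has lower degree. The
closed form satisfies the same two recurrences.
-/

theorem ne_zero_of_injective_pow {M : Type*} [MonoidWithZero M] {t : M}
    (ht : Function.Injective (fun n : ℕ => t ^ n)) : t ≠ 0 := by
  rintro rfl
  exact absurd (ht (show (0 : M) ^ 1 = 0 ^ 2 by simp)) (by norm_num)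

theorem ne_one_of_injective_pow {M : Type*} [Monoid M] {t : M}
    (ht : Function.Injective (fun n : ℕ => t ^ n)) : t ≠ 1 := by
  rintro rfl
  exact absurd (ht (show (1 : M) ^ 0 = 1 ^ 1 by simp)) (by norm_num)

theorem choose_two_succ (n : ℕ) : (n + 1).choose 2 = n.choose 2 + n := by
  rw [Nat.choose_succ_succ', Nat.choose_one_right, add_comm]

section QInt

variable {t : K}

theorem qint_zero : qint t 0 = 0 := by simp [qint]

theorem qint_add (ht0 : t ≠ 0) (ht1 : t ≠ 1) (m n : ℤ) :
    qint t (m + n) = qint t m + t ^ m * qint t n := by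
  have := sub_ne_zero.mpr ht1
  simp only [qint, zpow_add₀ ht0]
  field_simp
  ring

theorem qint_neg_one (ht0 : t ≠ 0) (ht1 : t ≠ 1) : qint t (-1) = -t⁻¹ := by
  have := sub_ne_zero.mpr ht1
  simp only [qint, zpow_neg_one]
  field_simp
  ring

theorem zpow_mul_qint_neg (ht0 : t ≠ 0) (ht1 : t ≠ 1) (n : ℤ) :
    t ^ n * qint t (-n) = -qint t n := by
  have h := qint_add ht0 ht1 n (-n)
  rw [add_neg_cancel, qint_zero] at h
  linear_combination -h

theorem qint_natCast_add_add_one (ht0 : t ≠ 0) (ht1 : t ≠ 1) (m n : ℕ) :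
    qint t (↑(m + n + 1) + 1) = qint t (↑m + 1) + t ^ (m + 1) * qint t (↑n + 1) := by
  rw [show t ^ (m + 1) = t ^ ((m : ℤ) + 1) by norm_cast, ← qint_add ht0 ht1]
  push_cast
  ring_nf

theorem qint_ne_zero (ht : Function.Injective (fun n : ℕ => t ^ n)) {n : ℤ} (hn : 0 < n) :
    qint t n ≠ 0 := by
  obtain ⟨k, rfl⟩ := Int.eq_ofNat_of_zero_le hn.le
  have hk : t ^ k ≠ t ^ 0 := ht.ne (by omega)
  rw [qint, zpow_natCast]
  exact div_ne_zero (sub_ne_zero.mpr (by simpa using hk))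
    (sub_ne_zero.mpr (ne_one_of_injective_pow ht))

theorem qint_natCast_injective (ht : Function.Injective (fun n : ℕ => t ^ n)) :
    Function.Injective (fun n : ℕ => qint t n) := by
  intro a b h
  have := sub_ne_zero.mpr (ne_one_of_injective_pow ht)
  simp only [qint, zpow_natCast, div_left_inj' this, sub_left_inj] at h
  exact ht h

theorem qfact_zero : qfact t 0 = 1 := by simp [qfact]

theorem qfact_succ (n : ℕ) : qfact t (n + 1) = qfact t n * qint t (n + 1) := by
  simp [qfact, prod_range_succ]

theorem qfact_ne_zero (ht : Function.Injective (fun n : ℕ => t ^ n)) (n : ℕ) :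
    qfact t n ≠ 0 :=
  prod_ne_zero_iff.mpr fun i _ => qint_ne_zero ht (by omega)

theorem qint_succ_mul_qfact_succ_inv (ht : Function.Injective (fun n : ℕ => t ^ n)) (n : ℕ) :
    qint t (n + 1) * (qfact t (n + 1))⁻¹ = (qfact t n)⁻¹ := by
  rw [qfact_succ, mul_inv, mul_left_comm,
    mul_inv_cancel₀ (qint_ne_zero ht (by omega)), mul_one]

end QInt

theorem eval_derivative_mul_of_eval_eq_zero {R : Type*} [CommRing R] {f g : R[X]} {x : R}
    (hg : g.eval x = 0) : (derivative (f * g)).eval x = f.eval x * (derivative g).eval x := by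
  simp [derivative_mul, hg]

section QBase

variable {t : K}

theorem derivative_qb (c : ℤ) : derivative (qb t c) = C (t ^ c) := by
  simp [qb]

theorem qb_eval_qint (ht0 : t ≠ 0) (ht1 : t ≠ 1) (c k : ℤ) :
    (qb t c).eval (qint t k) = qint t (c + k) := by
  simp [qb, qint_add ht0 ht1]

theorem qbase_eq_prod (m : ℤ) (n : ℕ) :
    qbase t m n = C (qfact t n)⁻¹ * ∏ r ∈ range n, qb t (m - r) := by
  rw [qbase, mul_comm, ← prod_range_reflect]
  congr 1
  refine prod_congr rfl fun r hr => ?_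
  rw [mem_range] at hr
  congr 1
  rw [Nat.sub_sub, Nat.cast_sub (by omega)]
  push_cast
  ring

theorem qbase_zero_right (m : ℤ) : qbase t m 0 = 1 := by
  simp [qbase_eq_prod, qfact_zero]

theorem qbase_eval_qint (ht0 : t ≠ 0) (ht1 : t ≠ 1) (m k : ℤ) (n : ℕ) :
    (qbase t m n).eval (qint t k) = qbinom t (m + k) n := by
  simp only [qbase_eq_prod, eval_mul, eval_C, eval_prod, qb_eval_qint ht0 ht1, qbinom]
  rw [div_eq_mul_inv, mul_comm]
  congr 1
  exact prod_congr rfl fun r _ => by ring_nf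

theorem qbase_succ_top (ht : Function.Injective (fun n : ℕ => t ^ n)) (m : ℤ) (n : ℕ) :
    C (qint t (n + 1)) * qbase t m (n + 1) = qb t m * qbase t (m - 1) n := by
  rw [qbase_eq_prod, qbase_eq_prod, ← mul_assoc, ← C_mul, qint_succ_mul_qfact_succ_inv ht,
    prod_range_succ']
  simp only [Nat.cast_add, Nat.cast_one, Nat.cast_zero, sub_zero, sub_add_eq_sub_sub_swap]
  ring

theorem qbase_succ_bot (ht : Function.Injective (fun n : ℕ => t ^ n)) (m : ℤ) (n : ℕ) :
    C (qint t (n + 1)) * qbase t m (n + 1) = qb t (m - n) * qbase t m n := by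
  rw [qbase_eq_prod, qbase_eq_prod, ← mul_assoc, ← C_mul, qint_succ_mul_qfact_succ_inv ht,
    prod_range_succ]
  ring

theorem X_mul_qbase (ht : Function.Injective (fun n : ℕ => t ^ n)) (m : ℤ) (n : ℕ) :
    C (t ^ (m + 1)) * X * qbase t m n =
      C (qint t (n + 1)) * qbase t (m + 1) (n + 1) - C (qint t (m + 1)) * qbase t m n := by
  rw [qbase_succ_top ht, add_sub_cancel_right, qb]
  ring

theorem qb_mul_qbase (ht : Function.Injective (fun n : ℕ => t ^ n)) (m c : ℤ) (d : ℕ) :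
    C (t ^ (m + 1)) * qb t c * qbase t m d =
      C (t ^ (m + 1) * qint t c - t ^ c * qint t (m + 1)) * qbase t m d +
        C (t ^ c * qint t (d + 1)) * qbase t (m + 1) (d + 1) := by
  have h := X_mul_qbase ht m d
  simp only [qb, C_mul, C_sub] at h ⊢
  linear_combination C (t ^ c) * h

theorem eq_of_eval_qint_eq (ht : Function.Injective (fun n : ℕ => t ^ n))
    {p p' : K[X]} (h : ∀ k : ℕ, p.eval (qint t k) = p'.eval (qint t k)) : p = p' :=
  eq_of_infinite_eval_eq p p' <| (Set.infinite_range_of_injective (qint_natCast_injective ht)).mono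
    (Set.range_subset_iff.mpr h)

end QBase

section QBinom

variable {t : K}

theorem qbinom_succ_succ (ht : Function.Injective (fun n : ℕ => t ^ n)) (M : ℤ) (n : ℕ) :
    qbinom t (M + 1) (n + 1) = qbinom t M (n + 1) + t ^ (M - n) * qbinom t M n := by
  have hsplit : qint t (M + 1) = qint t (M - n) + t ^ (M - n) * qint t (n + 1) := by
    rw [← qint_add (ne_zero_of_injective_pow ht) (ne_one_of_injective_pow ht)]
    ring_nf
  have hn := qint_ne_zero ht (show (0 : ℤ) < n + 1 by omega)
  simp only [qbinom, prod_range_succ' (fun i => qint t (M + 1 - i)), prod_range_succ, qfact_succ]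
  simp only [Nat.cast_add, Nat.cast_one, Nat.cast_zero, sub_zero, add_sub_add_right_eq_sub]
  rw [hsplit]
  field_simp

theorem qbinom_natCast_eq_zero (m a : ℕ) : qbinom t m (m + a + 1) = 0 := by
  rw [qbinom, prod_eq_zero (mem_range.mpr (by omega : m < m + a + 1)) (by simp [qint_zero]),
    zero_div]

theorem sum_range_pow_mul_qbinom (ht : Function.Injective (fun n : ℕ => t ^ n)) (m a k : ℕ) :
    ∑ r ∈ range (k + 1), t ^ r * qbinom t (m + r) (m + a) =
      t ^ a * qbinom t (m + 1 + k) (m + a + 1) := by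
  have hpow (M : ℤ) : t ^ a * t ^ (M - ↑(m + a)) = t ^ (M - m) := by
    rw [← zpow_natCast, ← zpow_add₀ (ne_zero_of_injective_pow ht)]
    push_cast
    ring_nf
  induction k with
  | zero =>
    have h := qbinom_succ_succ ht m (m + a)
    rw [qbinom_natCast_eq_zero, zero_add] at h
    simp only [zero_add, sum_range_one, pow_zero, one_mul, Nat.cast_zero, add_zero]
    rw [h, ← mul_assoc, hpow, sub_self, zpow_zero, one_mul]
  | succ k ih =>
    have h := qbinom_succ_succ ht (m + 1 + k) (m + a)
    rw [sum_range_succ, ih, Nat.cast_succ, ← add_assoc (m + 1 : ℤ), h, mul_add, ← mul_assoc,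
      hpow,
      show (m + 1 + k - m : ℤ) = (k + 1 : ℕ) by push_cast; ring, zpow_natCast]
    ring_nf

theorem prod_qint_mul_qfact (k l : ℕ) :
    (∏ r ∈ range k, qint t (k + l - r)) * qfact t l = qfact t (k + l) := by
  induction k with
  | zero => simp
  | succ k ih =>
    rw [prod_range_succ', Nat.add_right_comm, qfact_succ, ← ih]
    push_cast
    ring_nf

theorem qbinom_eq_qfact_div (ht : Function.Injective (fun n : ℕ => t ^ n)) (k l : ℕ) :
    qbinom t (k + l) k = qfact t (k + l) / (qfact t k * qfact t l) := by
  rw [qbinom, ← prod_qint_mul_qfact, mul_div_mul_right _ _ (qfact_ne_zero ht l)]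

theorem pow_choose_mul_prod_qint_neg (ht0 : t ≠ 0) (ht1 : t ≠ 1) (a : ℕ) :
    t ^ (a + 1).choose 2 * ∏ x ∈ range a, qint t (-x - 1) = (-1) ^ a * qfact t a := by
  induction a with
  | zero => simp [qfact_zero]
  | succ a ih =>
    have h : t ^ (a + 1) * qint t (-a - 1) = -qint t (a + 1) := by
      rw [← zpow_natCast, ← zpow_mul_qint_neg ht0 ht1]
      push_cast
      ring_nf
    rw [choose_two_succ, pow_add, prod_range_succ,
      qfact_succ, pow_succ]
    linear_combination (t ^ (a + 1) * qint t (-a - 1)) * ih + ((-1) ^ a * qfact t a) * h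

end QBinom

def psiClosedForm (t : K) (i a j b : ℕ) : K :=
  (-1) ^ (a + b) * t ^ (a * b) * qfact t (a + j) * qfact t (b + i) /
    (t ^ (a.choose 2 + b.choose 2) * qfact t (i + a + j + b + 1))

section ClosedForm

variable {t : K}

theorem psiClosedForm_recurrence_bot (ht : Function.Injective (fun n : ℕ => t ^ n))
    (i a j b : ℕ) :
    t ^ (b + i + 1) * qint t (↑(j + b) + 1) * psiClosedForm t i a j (b + 1) =
      qint t (↑(i + a) + 1) * psiClosedForm t (i + 1) a j b -
        qint t (↑i + ↑b + 1) * psiClosedForm t i a j b := by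
  have hsum : qint t (↑(i + a + j + b + 1) + 1) =
      qint t (↑(i + a) + 1) + t ^ (i + a + 1) * qint t (↑(j + b) + 1) := by
    rw [show i + a + j + b + 1 = i + a + (j + b) + 1 by omega]
    exact qint_natCast_add_add_one (ne_zero_of_injective_pow ht) (ne_one_of_injective_pow ht) _ _
  have h1 := qfact_ne_zero ht (i + a + j + b + 1)
  have h2 := qint_ne_zero ht (show (0 : ℤ) < ↑(i + a + j + b + 1) + 1 by omega)
  have h3 := ne_zero_of_injective_pow ht
  simp only [psiClosedForm]
  rw [show b + 1 + i = b + i + 1 by omega, show b + (i + 1) = b + i + 1 by omega,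
    show i + a + j + (b + 1) + 1 = i + a + j + b + 1 + 1 by omega,
    show i + 1 + a + j + b + 1 = i + a + j + b + 1 + 1 by omega,
    choose_two_succ,
    show (↑i + ↑b + 1 : ℤ) = ↑(b + i) + 1 by push_cast; ring, qfact_succ, qfact_succ]
  field_simp
  linear_combination (-1) ^ (a + b) * t ^ (a * b + b + a.choose 2 + b.choose 2) *
    qfact t (a + j) * qfact t (b + i) * qint t (↑(b + i) + 1) * hsum

theorem psiClosedForm_recurrence_top (ht : Function.Injective (fun n : ℕ => t ^ n))
    (i a j : ℕ) :
    t ^ (i + 1) * qint t (↑j + 1) * psiClosedForm t i a (j + 1) 0 =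
      (t ^ (i + 1) * qint t (↑j + 1) - t ^ (j + 1) * qint t (↑i + 1)) *
          psiClosedForm t i a j 0 +
        t ^ (j + 1) * qint t (↑(i + a) + 1) * psiClosedForm t (i + 1) a j 0 := by
  have ht0 := ne_zero_of_injective_pow ht
  have ht1 := ne_one_of_injective_pow ht
  have hsum₁ : qint t (↑(i + a + j + 1) + 1) =
      qint t (↑(i + a) + 1) + t ^ (i + a + 1) * qint t (↑j + 1) :=
    qint_natCast_add_add_one ht0 ht1 (i + a) j
  have hsum₂ : qint t (↑(i + a + j + 1) + 1) =
      qint t (↑(a + j) + 1) + t ^ (a + j + 1) * qint t (↑i + 1) := by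
    rw [show i + a + j + 1 = a + j + i + 1 by omega]
    exact qint_natCast_add_add_one ht0 ht1 (a + j) i
  have h1 := qfact_ne_zero ht (i + a + j + 1)
  have h2 := qint_ne_zero ht (show (0 : ℤ) < ↑(i + a + j + 1) + 1 by omega)
  simp only [psiClosedForm, add_zero, zero_add, mul_zero, pow_zero, mul_one, Nat.choose_zero_succ]
  rw [show a + (j + 1) = a + j + 1 by omega, show i + a + (j + 1) + 1 = i + a + j + 1 + 1 by omega,
    show i + 1 + a + j + 1 = i + a + j + 1 + 1 by omega, qfact_succ (a + j),
    qfact_succ (i + a + j + 1), qfact_succ i]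
  field_simp
  linear_combination qfact t (a + j) * qfact t i *
    (t ^ (j + 1) * qint t (↑i + 1) * hsum₁ - t ^ (i + 1) * qint t (↑j + 1) * hsum₂)

theorem psiClosedForm_eq (ht : Function.Injective (fun n : ℕ => t ^ n)) (i a j b : ℕ) :
    psiClosedForm t i a j b =
      (-1) ^ (a + b) * t ^ (-(a.choose 2 : ℤ) + a * b - b.choose 2) /
        (qint t (i + a + (j + b) + 1) * qbinom t (i + a + (j + b)) (a + j)) := by
  have ht0 := ne_zero_of_injective_pow ht
  rw [show (i + a + (j + b) + 1 : ℤ) = ↑(i + a + j + b) + 1 by push_cast; ring,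
    show (i + a + (j + b) : ℤ) = ↑(a + j) + ↑(b + i) by push_cast; ring,
    qbinom_eq_qfact_div ht, show a + j + (b + i) = i + a + j + b by omega,
    show -(a.choose 2 : ℤ) + a * b - b.choose 2 = ↑(a * b) - ↑(a.choose 2 + b.choose 2) by
      push_cast; ring, zpow_sub₀ ht0, zpow_natCast, zpow_natCast, psiClosedForm, qfact_succ]
  field_simp

end ClosedForm

theorem qq_pow_injective : Function.Injective (fun n : ℕ => qq ^ n) := by
  intro a b h
  simp only [qq, ← RatFunc.algebraMap_X (K := ℚ), ← map_pow] at h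
  simpa using congrArg natDegree (RatFunc.algebraMap_injective ℚ h)

theorem qq_ne_zero : qq ≠ 0 := ne_zero_of_injective_pow qq_pow_injective

theorem qq_ne_one : qq ≠ 1 := ne_one_of_injective_pow qq_pow_injective

theorem IsQSigma.apply_qbase {S : K[X] →ₗ[K] K[X]} (hS : IsQSigma S) (m a : ℕ) :
    S (qbase qq m (m + a)) = qq ^ a • qbase qq (m + 1) (m + a + 1) := by
  refine eq_of_eval_qint_eq qq_pow_injective fun k => ?_
  simp only [hS _ k, eval_smul, smul_eq_mul, qbase_eval_qint qq_ne_zero qq_ne_one]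
  exact sum_range_pow_mul_qbinom qq_pow_injective m a k

theorem qV_add (E F : K[X]) : qV (E + F) = qV E + qV F := by
  rw [qV, qV, qV, derivative_add, eval_add, add_div]

theorem qV_smul (c : K) (E : K[X]) : qV (c • E) = c * qV E := by
  rw [qV, qV, derivative_smul, eval_smul, smul_eq_mul, mul_div_assoc]

theorem qV_qbase (i a : ℕ) :
    qV (qbase qq (i + 1) (i + a + 1)) =
      (-1) ^ a * qfact qq a * qfact qq i / (qq ^ (a + 1).choose 2 * qfact qq (i + a + 1)) := by
  have hroot : (qb qq 1).eval (-qq⁻¹) = 0 := by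
    rw [← qint_neg_one qq_ne_zero qq_ne_one, qb_eval_qint qq_ne_zero qq_ne_one, add_neg_cancel,
      qint_zero]
  have hsplit : ∏ r ∈ range (i + a + 1), qb qq (i + 1 - r) =
      (∏ r ∈ range i, qb qq (i + 1 - r)) * (∏ x ∈ range a, qb qq (-x)) * qb qq 1 := by
    rw [add_assoc, prod_range_add, prod_range_succ']
    push_cast
    ring_nf
  have hi : ∏ r ∈ range i, qint qq (i + 1 - r + -1) = qfact qq i := by
    have h := prod_qint_mul_qfact (t := qq) i 0
    simp only [Nat.cast_zero, add_zero, qfact_zero, mul_one] at h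
    rw [← h]
    exact prod_congr rfl fun r _ => by ring_nf
  have ha : ∏ x ∈ range a, qint qq (-x + -1) =
      (-1) ^ a * qfact qq a / qq ^ (a + 1).choose 2 := by
    rw [eq_div_iff (pow_ne_zero _ qq_ne_zero), mul_comm, ← pow_choose_mul_prod_qint_neg
      qq_ne_zero qq_ne_one]
    ring_nf
  rw [qV, qbase_eq_prod, hsplit, ← mul_assoc, eval_derivative_mul_of_eval_eq_zero hroot]
  simp only [eval_mul, eval_C, eval_prod, derivative_qb, ← qint_neg_one qq_ne_zero qq_ne_one,
    qb_eval_qint qq_ne_zero qq_ne_one, hi, ha, zpow_one]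
  field_simp [qq_ne_zero]

theorem IsQSigma.qV_apply_qbase {S : K[X] →ₗ[K] K[X]} (hS : IsQSigma S) (i a : ℕ) :
    qV (S (qbase qq i (i + a))) =
      (-1) ^ a * qfact qq a * qfact qq i / (qq ^ a.choose 2 * qfact qq (i + a + 1)) := by
  rw [hS.apply_qbase, qV_smul, qV_qbase, choose_two_succ, pow_add]
  field_simp [qq_ne_zero]

section Psi

variable (S : K[X] →ₗ[K] K[X])

def psiQbase (i a j b : ℕ) : K := qV (S (qbase qq i (i + a) * qbase qq j (j + b)))

theorem psiQbase_succ_eq (i a j b : ℕ) :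
    psiQbase S (i + 1) a j b = qV (S (qbase qq (i + 1) (i + a + 1) * qbase qq j (j + b))) := by
  rw [psiQbase, Nat.cast_succ, Nat.add_right_comm]

theorem qV_map_qb_mul (m c : ℤ) (d : ℕ) (Q : K[X]) :
    qq ^ (m + 1) * qV (S (qb qq c * (qbase qq m d * Q))) =
      (qq ^ (m + 1) * qint qq c - qq ^ c * qint qq (m + 1)) * qV (S (qbase qq m d * Q)) +
        qq ^ c * qint qq (d + 1) * qV (S (qbase qq (m + 1) (d + 1) * Q)) := by
  have h := congrArg (fun p => qV (S (p * Q))) (qb_mul_qbase qq_pow_injective m c d)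
  simpa only [add_mul, mul_assoc, ← smul_eq_C_mul, smul_mul_assoc, map_add, map_smul, qV_add,
    qV_smul] using h

theorem psiQbase_recurrence_bot (i a j b : ℕ) :
    qq ^ (b + i + 1) * qint qq (↑(j + b) + 1) * psiQbase S i a j (b + 1) =
      qint qq (↑(i + a) + 1) * psiQbase S (i + 1) a j b -
        qint qq (↑i + ↑b + 1) * psiQbase S i a j b := by
  have hbot := qbase_succ_bot qq_pow_injective j (j + b)
  rw [show (j : ℤ) - ↑(j + b) = -↑b by push_cast; ring] at hbot
  have hfactor : qint qq (↑(j + b) + 1) * psiQbase S i a j (b + 1) =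
      qV (S (qb qq (-b) * (qbase qq i (i + a) * qbase qq j (j + b)))) := by
    rw [psiQbase, ← qV_smul, ← map_smul, smul_eq_C_mul, mul_left_comm, ← add_assoc, hbot,
      mul_left_comm]
  have key := qV_map_qb_mul S i (-b) (i + a) (qbase qq j (j + b))
  have hinv : qq ^ b * qq ^ (-(b : ℤ)) = 1 := by
    rw [zpow_neg, zpow_natCast, mul_inv_cancel₀ (pow_ne_zero _ qq_ne_zero)]
  have hcoeff :
      qq ^ b * (qq ^ ((i : ℤ) + 1) * qint qq (-b) - qq ^ (-(b : ℤ)) * qint qq (i + 1)) =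
        -qint qq (i + b + 1) := by
    have hneg := zpow_mul_qint_neg qq_ne_zero qq_ne_one b
    rw [zpow_natCast] at hneg
    rw [show (i : ℤ) + b + 1 = i + 1 + b by ring, qint_add qq_ne_zero qq_ne_one ((i : ℤ) + 1)]
    linear_combination qq ^ ((i : ℤ) + 1) * hneg - qint qq (i + 1) * hinv
  rw [← psiQbase, ← psiQbase_succ_eq] at key
  rw [mul_assoc, hfactor, show b + i + 1 = b + (i + 1) by omega, pow_add, mul_assoc,
    show (qq ^ (i + 1) : K) = qq ^ ((i : ℤ) + 1) by norm_cast, key]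
  linear_combination psiQbase S i a j b * hcoeff +
    qint qq (↑(i + a) + 1) * psiQbase S (i + 1) a j b * hinv

theorem psiQbase_recurrence_top (i a j : ℕ) :
    qq ^ (i + 1) * qint qq (↑j + 1) * psiQbase S i a (j + 1) 0 =
      (qq ^ (i + 1) * qint qq (↑j + 1) - qq ^ (j + 1) * qint qq (↑i + 1)) * psiQbase S i a j 0 +
        qq ^ (j + 1) * qint qq (↑(i + a) + 1) * psiQbase S (i + 1) a j 0 := by
  have htop := qbase_succ_top qq_pow_injective (j + 1) j
  rw [add_sub_cancel_right] at htop
  have hfactor : qint qq (↑j + 1) * psiQbase S i a (j + 1) 0 =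
      qV (S (qb qq (j + 1) * (qbase qq i (i + a) * qbase qq j (j + 0)))) := by
    rw [psiQbase, ← qV_smul, ← map_smul, smul_eq_C_mul, mul_left_comm, add_zero, add_zero,
      Nat.cast_succ, htop, mul_left_comm]
  have key := qV_map_qb_mul S i (j + 1) (i + a) (qbase qq j (j + 0))
  rw [← psiQbase, ← psiQbase_succ_eq,
    show (qq ^ ((j : ℤ) + 1)) = qq ^ (j + 1) by norm_cast] at key
  rw [mul_assoc, hfactor, show (qq ^ (i + 1) : K) = qq ^ ((i : ℤ) + 1) by norm_cast, key]

end Psi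

theorem IsQSigma.psiQbase_eq {S : K[X] →ₗ[K] K[X]} (hS : IsQSigma S) (i a j b : ℕ) :
    psiQbase S i a j b = psiClosedForm qq i a j b := by
  induction b generalizing i with
  | zero =>
    induction j generalizing i with
    | zero =>
      rw [psiQbase, add_zero, Nat.cast_zero, qbase_zero_right, mul_one, hS.qV_apply_qbase]
      simp [psiClosedForm]
    | succ j ih =>
      have hc : qq ^ (i + 1) * qint qq (↑j + 1) ≠ 0 :=
        mul_ne_zero (pow_ne_zero _ qq_ne_zero) (qint_ne_zero qq_pow_injective (by omega))
      apply mul_left_cancel₀ hc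
      rw [psiQbase_recurrence_top, psiClosedForm_recurrence_top qq_pow_injective, ih, ih]
  | succ b ih =>
    have hc : qq ^ (b + i + 1) * qint qq (↑(j + b) + 1) ≠ 0 :=
      mul_ne_zero (pow_ne_zero _ qq_ne_zero) (qint_ne_zero qq_pow_injective (by omega))
    apply mul_left_cancel₀ hc
    rw [psiQbase_recurrence_bot, psiClosedForm_recurrence_bot qq_pow_injective, ih, ih]

theorem psi_qbase_product (S : Polynomial K →ₗ[K] Polynomial K) (hS : IsQSigma S)
    (i d j e : ℕ) (hid : i ≤ d) (hje : j ≤ e) :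
    qV (S (qbase qq i d * qbase qq j e)) =
      (-1) ^ (d - i + (e - j)) *
        qq ^ (-(((d - i).choose 2 : ℤ)) + ((d - i) * (e - j) : ℤ) - ((e - j).choose 2 : ℤ)) /
        (qint qq (d + e + 1) * qbinom qq (d + e) (d - i + j)) := by
  obtain ⟨a, rfl⟩ := Nat.exists_eq_add_of_le hid
  obtain ⟨b, rfl⟩ := Nat.exists_eq_add_of_le hje
  rw [← psiQbase, hS.psiQbase_eq, psiClosedForm_eq qq_pow_injective]
  push_cast
  simp only [Nat.add_sub_cancel_left, add_sub_cancel_left]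

end
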